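/- Let u : ℝⁿ × [0,∞) → ℝ be continuous and satisfy u ≥ c₀ on ℝⁿ × [0,∞) for some constant c₀ > 0, and fix λ ∈ (0,1). Then u_{q,λ} converges to u_{⋆,λ} uniformly on every compact subset of ℝⁿ × [0,∞) as q → ∞. -/

import Mathlib

/-!
Write `m = min λ (1 - λ)`. For `a, b ≥ 0` the weighted power mean is squeezed between
`max a b` and `m ^ (1/q) * max a b`, because whichever of `a`, `b` is the larger enters
with weight at least `m`. Taking infima over the same pairs `(y, z)` gives
`m ^ (1/q) * u_{⋆,λ} ≤ u_{q,λ} ≤ u_{⋆,λ}`, and `u_{⋆,λ} ≤ u` is bounded on a compact set,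
so the gap is at most `(1 - m ^ (1/q)) * sup_S u`, which tends to `0` as `q → ∞`.
-/

open Filter Topology

/-- The spatially quasiconvex envelope `u_{⋆,λ}` of `u`. -/
noncomputable def qcEnv {n : ℕ} (lam : ℝ) (u : EuclideanSpace ℝ (Fin n) → ℝ → ℝ)
    (x : EuclideanSpace ℝ (Fin n)) (t : ℝ) : ℝ :=
  sInf {m : ℝ | ∃ y z : EuclideanSpace ℝ (Fin n),
    lam • y + (1 - lam) • z = x ∧ m = max (u y t) (u z t)}

/-- The spatially power convex envelope `u_{q,λ}` of `u`. -/
noncomputable def pcEnv {n : ℕ} (lam q : ℝ) (u : EuclideanSpace ℝ (Fin n) → ℝ → ℝ)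
    (x : EuclideanSpace ℝ (Fin n)) (t : ℝ) : ℝ :=
  sInf {m : ℝ | ∃ y z : EuclideanSpace ℝ (Fin n),
    lam • y + (1 - lam) • z = x ∧
    m = (lam * (u y t) ^ q + (1 - lam) * (u z t) ^ q) ^ (1 / q)}

section PowerMean

variable {a b lam q : ℝ}

lemma powerMean_le_max (ha : 0 ≤ a) (hb : 0 ≤ b) (hl0 : 0 ≤ lam) (hl1 : lam ≤ 1)
    (hq : 0 < q) : (lam * a ^ q + (1 - lam) * b ^ q) ^ (1 / q) ≤ max a b := by
  have hmax : 0 ≤ max a b := ha.trans (le_max_left a b)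
  have hpow : lam * a ^ q + (1 - lam) * b ^ q ≤ max a b ^ q := by
    have hA := Real.rpow_le_rpow ha (le_max_left a b) hq.le
    have hB := Real.rpow_le_rpow hb (le_max_right a b) hq.le
    nlinarith
  calc (lam * a ^ q + (1 - lam) * b ^ q) ^ (1 / q) ≤ (max a b ^ q) ^ q⁻¹ := by
        rw [one_div]
        exact Real.rpow_le_rpow (by positivity) hpow (by positivity)
    _ = max a b := Real.rpow_rpow_inv hmax hq.ne'

lemma min_rpow_mul_max_le_powerMean (ha : 0 ≤ a) (hb : 0 ≤ b) (hl0 : 0 ≤ lam)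
    (hl1 : lam ≤ 1) (hq : 0 < q) :
    min lam (1 - lam) ^ (1 / q) * max a b ≤
      (lam * a ^ q + (1 - lam) * b ^ q) ^ (1 / q) := by
  have hm : 0 ≤ min lam (1 - lam) := le_min hl0 (by linarith)
  have hmax : 0 ≤ max a b := ha.trans (le_max_left a b)
  have hpow : min lam (1 - lam) * max a b ^ q ≤ lam * a ^ q + (1 - lam) * b ^ q := by
    have haq := Real.rpow_nonneg ha q
    have hbq := Real.rpow_nonneg hb q
    rcases le_total a b with hab | hba
    · rw [max_eq_right hab]
      nlinarith [min_le_right lam (1 - lam)]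
    · rw [max_eq_left hba]
      nlinarith [min_le_left lam (1 - lam)]
  calc min lam (1 - lam) ^ (1 / q) * max a b
      = (min lam (1 - lam) * max a b ^ q) ^ (1 / q) := by
        rw [Real.mul_rpow hm (Real.rpow_nonneg hmax q), one_div,
          Real.rpow_rpow_inv hmax hq.ne']
    _ ≤ (lam * a ^ q + (1 - lam) * b ^ q) ^ (1 / q) :=
        Real.rpow_le_rpow (by positivity) hpow (by positivity)

end PowerMean

section Envelopes

variable {n : ℕ} {u : EuclideanSpace ℝ (Fin n) → ℝ → ℝ} {lam q : ℝ}
  {x : EuclideanSpace ℝ (Fin n)} {t : ℝ}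

lemma smul_add_one_sub_smul_self (lam : ℝ) (x : EuclideanSpace ℝ (Fin n)) :
    lam • x + (1 - lam) • x = x := by
  rw [← add_smul, add_sub_cancel, one_smul]

lemma qcEnv_nonneg (hu : ∀ y, 0 ≤ u y t) : 0 ≤ qcEnv lam u x t :=
  Real.sInf_nonneg fun _ ⟨y, _, _, hm⟩ => hm ▸ (hu y).trans (le_max_left _ _)

lemma bddBelow_qcEnv_set (hu : ∀ y, 0 ≤ u y t) :
    BddBelow {m : ℝ | ∃ y z : EuclideanSpace ℝ (Fin n),
      lam • y + (1 - lam) • z = x ∧ m = max (u y t) (u z t)} :=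
  ⟨0, fun _ ⟨y, _, _, hm⟩ => hm ▸ (hu y).trans (le_max_left _ _)⟩

lemma qcEnv_le_self (hu : ∀ y, 0 ≤ u y t) : qcEnv lam u x t ≤ u x t :=
  (csInf_le (bddBelow_qcEnv_set hu) ⟨x, x, smul_add_one_sub_smul_self lam x, rfl⟩).trans_eq
    (max_self _)

lemma pcEnv_le_qcEnv (hu : ∀ y, 0 ≤ u y t) (hl0 : 0 ≤ lam) (hl1 : lam ≤ 1) (hq : 0 < q) :
    pcEnv lam q u x t ≤ qcEnv lam u x t := by
  refine le_csInf ⟨_, x, x, smul_add_one_sub_smul_self lam x, rfl⟩ ?_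
  rintro _ ⟨y, z, hyz, rfl⟩
  have hbdd : BddBelow {m : ℝ | ∃ y z : EuclideanSpace ℝ (Fin n),
      lam • y + (1 - lam) • z = x ∧
      m = (lam * (u y t) ^ q + (1 - lam) * (u z t) ^ q) ^ (1 / q)} := by
    refine ⟨0, ?_⟩
    rintro _ ⟨y, z, -, rfl⟩
    have := Real.rpow_nonneg (hu y) q
    have := Real.rpow_nonneg (hu z) q
    exact Real.rpow_nonneg (by nlinarith) _
  exact (csInf_le hbdd ⟨y, z, hyz, rfl⟩).trans (powerMean_le_max (hu y) (hu z) hl0 hl1 hq)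

lemma min_rpow_mul_qcEnv_le_pcEnv (hu : ∀ y, 0 ≤ u y t) (hl0 : 0 ≤ lam) (hl1 : lam ≤ 1)
    (hq : 0 < q) : min lam (1 - lam) ^ (1 / q) * qcEnv lam u x t ≤ pcEnv lam q u x t := by
  refine le_csInf ⟨_, x, x, smul_add_one_sub_smul_self lam x, rfl⟩ ?_
  rintro _ ⟨y, z, hyz, rfl⟩
  calc min lam (1 - lam) ^ (1 / q) * qcEnv lam u x t
      ≤ min lam (1 - lam) ^ (1 / q) * max (u y t) (u z t) :=
        mul_le_mul_of_nonneg_left (csInf_le (bddBelow_qcEnv_set hu) ⟨y, z, hyz, rfl⟩)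
          (Real.rpow_nonneg (le_min hl0 (by linarith)) _)
    _ ≤ _ := min_rpow_mul_max_le_powerMean (hu y) (hu z) hl0 hl1 hq

lemma dist_qcEnv_pcEnv_le {M : ℝ} (hu : ∀ y, 0 ≤ u y t) (hM : u x t ≤ M) (hl0 : 0 ≤ lam)
    (hl1 : lam ≤ 1) (hq : 0 < q) :
    dist (qcEnv lam u x t) (pcEnv lam q u x t) ≤ (1 - min lam (1 - lam) ^ (1 / q)) * M := by
  have hm1 : min lam (1 - lam) ^ (1 / q) ≤ 1 :=
    Real.rpow_le_one (le_min hl0 (by linarith)) ((min_le_left _ _).trans hl1) (by positivity)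
  have hupper := pcEnv_le_qcEnv (x := x) hu hl0 hl1 hq
  have hlower := min_rpow_mul_qcEnv_le_pcEnv (x := x) hu hl0 hl1 hq
  have hqc := (qcEnv_le_self (lam := lam) (x := x) hu).trans hM
  rw [Real.dist_eq, abs_of_nonneg (sub_nonneg.2 hupper)]
  nlinarith [mul_le_mul_of_nonneg_left hqc (sub_nonneg.2 hm1)]

end Envelopes

lemma tendsto_const_rpow_one_div_atTop {m : ℝ} (hm : m ≠ 0) :
    Tendsto (fun q : ℝ => m ^ (1 / q)) atTop (𝓝 1) := by
  have h : Tendsto (fun q : ℝ => 1 / q) atTop (𝓝 0) := tendsto_const_nhds.div_atTop tendsto_id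
  simpa [Function.comp_def] using ((Real.continuousAt_const_rpow hm).tendsto).comp h

lemma tendstoUniformlyOn_of_dist_le {ι α β : Type*} [PseudoMetricSpace β] {l : Filter ι}
    {F : ι → α → β} {f : α → β} {S : Set α} {δ : ι → ℝ} (hδ : Tendsto δ l (𝓝 0))
    (h : ∀ᶠ i in l, ∀ p ∈ S, dist (f p) (F i p) ≤ δ i) : TendstoUniformlyOn F f l S := by
  rw [Metric.tendstoUniformlyOn_iff]
  intro ε hε
  filter_upwards [h, hδ.eventually_lt_const hε] with i hi hδi p hp
  exact (hi p hp).trans_lt hδi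

/-- Proposition 4.1 of the paper: if `u` is continuous on `ℝⁿ × [0,∞)` and uniformly
positive, then `u_{q,λ} → u_{⋆,λ}` uniformly on every compact subset of `ℝⁿ × [0,∞)`
as `q → ∞`. -/
theorem stmt_5 {n : ℕ} (c₀ : ℝ) (hc₀ : 0 < c₀)
    (u : EuclideanSpace ℝ (Fin n) → ℝ → ℝ)
    (hu : ContinuousOn (fun p : EuclideanSpace ℝ (Fin n) × ℝ => u p.1 p.2)
      {p : EuclideanSpace ℝ (Fin n) × ℝ | 0 ≤ p.2})
    (hpos : ∀ x t, 0 ≤ t → c₀ ≤ u x t)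
    (lam : ℝ) (hlam : lam ∈ Set.Ioo (0 : ℝ) 1) :
    ∀ S : Set (EuclideanSpace ℝ (Fin n) × ℝ), IsCompact S →
      S ⊆ {p : EuclideanSpace ℝ (Fin n) × ℝ | 0 ≤ p.2} →
      TendstoUniformlyOn
        (fun (q : ℝ) (p : EuclideanSpace ℝ (Fin n) × ℝ) => pcEnv lam q u p.1 p.2)
        (fun p : EuclideanSpace ℝ (Fin n) × ℝ => qcEnv lam u p.1 p.2)
        Filter.atTop S := by
  intro S hS hsub
  obtain ⟨M, hM⟩ := (hS.image_of_continuousOn (hu.mono hsub)).bddAbove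
  have hu0 : ∀ p ∈ S, ∀ y, 0 ≤ u y p.2 := fun p hp y => hc₀.le.trans (hpos y p.2 (hsub hp))
  have hgap : Tendsto (fun q : ℝ => (1 - min lam (1 - lam) ^ (1 / q)) * M) atTop (𝓝 0) := by
    have hm : min lam (1 - lam) ≠ 0 := (lt_min hlam.1 (sub_pos.2 hlam.2)).ne'
    simpa using ((tendsto_const_rpow_one_div_atTop hm).const_sub 1).mul_const M
  refine tendstoUniformlyOn_of_dist_le hgap ?_
  filter_upwards [eventually_gt_atTop 0] with q hq p hp
  exact dist_qcEnv_pcEnv_le (hu0 p hp) (hM ⟨p, hp, rfl⟩) hlam.1.le hlam.2.le hq
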